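/- If the preferences are symmetric, then every maximum arrangement (an arrangement maximizing the social welfare) is stable; in particular, a stable arrangement always exists under symmetric preferences, so the price of stability of symmetric Seat Arrangement is 1. -/
import Mathlib


open scoped Classical

noncomputable section

namespace SeatArrangement

variable {P V : Type*}

/-- The utility of agent `p` under arrangement `π`:
the sum, over the seat-graph neighbors `v` of `π p`, of `p`'s preference for the agent seated
at `v`. -/
def utility [Fintype V] (G : SimpleGraph V) (f : P → P → ℝ) (π : P ≃ V) (p : P) : ℝ :=
  ∑ v : V, if G.Adj (π p) v then f p (π.symm v) else 0

/-- The social welfare of an arrangement: the sum of the utilities of all agents. -/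
def sw [Fintype P] [Fintype V] (G : SimpleGraph V) (f : P → P → ℝ) (π : P ≃ V) : ℝ :=
  ∑ p : P, utility G f π p

/-- The `(p,q)`-swap arrangement of `π`. -/
def swapArr (π : P ≃ V) (p q : P) : P ≃ V := (Equiv.swap p q).trans π

/-- `{p, q}` is a blocking pair for `π`: both agents strictly improve by swapping seats. -/
def blocking [Fintype V] (G : SimpleGraph V) (f : P → P → ℝ) (π : P ≃ V) (p q : P) : Prop :=
  p ≠ q ∧ utility G f π p < utility G f (swapArr π p q) p
        ∧ utility G f π q < utility G f (swapArr π p q) q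

/-- An arrangement is stable if it has no blocking pair. -/
def stable [Fintype V] (G : SimpleGraph V) (f : P → P → ℝ) (π : P ≃ V) : Prop :=
  ∀ p q : P, ¬ blocking G f π p q

/-- An arrangement is envy-free if no agent would strictly improve by taking
another agent's seat (via a swap). -/
def envyFree [Fintype V] (G : SimpleGraph V) (f : P → P → ℝ) (π : P ≃ V) : Prop :=
  ∀ p q : P, p ≠ q → utility G f (swapArr π p q) p ≤ utility G f π p

/-- The least utility of an agent under `π` (for a finite nonempty set of agents, the
infimum of the range of utilities is the minimum utility). -/
def minUtil [Fintype V] (G : SimpleGraph V) (f : P → P → ℝ) (π : P ≃ V) : ℝ :=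
  sInf (Set.range (utility G f π))

/-- A maximin arrangement maximizes the least utility of an agent. -/
def maximin [Fintype V] (G : SimpleGraph V) (f : P → P → ℝ) (πf : P ≃ V) : Prop :=
  ∀ π : P ≃ V, minUtil G f π ≤ minUtil G f πf

/-- A maximum arrangement maximizes the social welfare. -/
def maximum [Fintype P] [Fintype V] (G : SimpleGraph V) (f : P → P → ℝ) (πm : P ≃ V) : Prop :=
  ∀ π : P ≃ V, sw G f π ≤ sw G f πm

end SeatArrangement

open SeatArrangement

section AuxProofs

variable {P V : Type*} [Fintype P] [Fintype V]

/-- Adjacency weight of the seats of two agents. -/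
private def aw (G : SimpleGraph V) (π : P ≃ V) (r s : P) : ℝ :=
  if G.Adj (π r) (π s) then 1 else 0

private lemma aw_symm (G : SimpleGraph V) (π : P ≃ V) (r s : P) :
    aw G π r s = aw G π s r := by
  simp [aw, G.adj_comm]

private lemma aw_diag (G : SimpleGraph V) (π : P ≃ V) (r : P) :
    aw G π r r = 0 := by
  simp [aw]

private lemma utility_eq (G : SimpleGraph V) (f : P → P → ℝ) (π : P ≃ V) (r : P) :
    utility G f π r = ∑ s : P, aw G π r s * f r s := by
  rw [utility, ← Equiv.sum_comp π (fun v => if G.Adj (π r) v then f r (π.symm v) else 0)]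
  apply Finset.sum_congr rfl
  intro s _
  simp [aw, ite_mul]

private lemma key_sum (p q : P) (hpq : p ≠ q) (D : P → P → ℝ)
    (hsymD : ∀ r s, D r s = D s r)
    (hzero : ∀ r s, r ≠ p → r ≠ q → s ≠ p → s ≠ q → D r s = 0)
    (hpp : D p p = 0) (hpq0 : D p q = 0) (hqp : D q p = 0) (hqq : D q q = 0) :
    ∑ r : P, ∑ s : P, D r s = 2 * (∑ s : P, D p s + ∑ s : P, D q s) := by
  classical
  have hsub : ({p, q} : Finset P) ⊆ Finset.univ := Finset.subset_univ _
  -- sum over {p,q} of a function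
  have hpair : ∀ g : P → ℝ, ∑ r ∈ ({p, q} : Finset P), g r = g p + g q := by
    intro g; exact Finset.sum_pair hpq
  -- restrict inner sums
  have hinner : ∀ r, r ≠ p → r ≠ q → ∑ s : P, D r s = D r p + D r q := by
    intro r hrp hrq
    rw [← Finset.sum_subset hsub (fun s _ hs => by
      simp only [Finset.mem_insert, Finset.mem_singleton, not_or] at hs
      exact hzero r s hrp hrq hs.1 hs.2)]
    exact hpair _
  have hDp : ∑ s : P, D p s = ∑ s ∈ Finset.univ \ ({p, q} : Finset P), D p s := by
    rw [← Finset.sum_sdiff hsub, hpair, hpp, hpq0]; ring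
  have hDq : ∑ s : P, D q s = ∑ s ∈ Finset.univ \ ({p, q} : Finset P), D q s := by
    rw [← Finset.sum_sdiff hsub, hpair, hqp, hqq]; ring
  rw [← Finset.sum_sdiff hsub (f := fun r => ∑ s : P, D r s), hpair]
  have houter : ∑ r ∈ Finset.univ \ ({p, q} : Finset P), ∑ s : P, D r s
      = ∑ s : P, D p s + ∑ s : P, D q s := by
    rw [hDp, hDq, ← Finset.sum_add_distrib]
    apply Finset.sum_congr rfl
    intro r hr
    simp only [Finset.mem_sdiff, Finset.mem_insert, Finset.mem_singleton, not_or] at hr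
    rw [hinner r hr.2.1 hr.2.2, hsymD r p, hsymD r q]
  rw [houter]; ring

private lemma sw_swap_eq (G : SimpleGraph V) (f : P → P → ℝ)
    (hsym : ∀ p q : P, p ≠ q → f p q = f q p) (π : P ≃ V) (p q : P) (hpq : p ≠ q) :
    sw G f (swapArr π p q) - sw G f π
      = 2 * ((utility G f (swapArr π p q) p - utility G f π p)
           + (utility G f (swapArr π p q) q - utility G f π q)) := by
  classical
  set σ : Equiv.Perm P := Equiv.swap p q with hσ
  -- utility under the swapped arrangement
  have h2 : ∀ r, utility G f (swapArr π p q) r = ∑ s : P, aw G π (σ r) (σ s) * f r s := by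
    intro r
    rw [utility_eq]
    apply Finset.sum_congr rfl
    intro s _
    have e1 : swapArr π p q r = π (σ r) := rfl
    have e2 : swapArr π p q s = π (σ s) := rfl
    simp [aw, e1, e2]
  -- reindexing the inner sum by σ
  have reidx : ∀ x y : P, ∑ s : P, aw G π x (σ s) * f y s
      = ∑ s : P, aw G π x s * f y (σ s) := by
    intro x y
    rw [← Equiv.sum_comp σ (fun s => aw G π x s * f y (σ s))]
    apply Finset.sum_congr rfl
    intro s _
    simp [hσ, Equiv.swap_apply_self]
  -- social welfare under the swapped arrangement, fully reindexed
  have hsw' : sw G f (swapArr π p q) = ∑ r : P, ∑ s : P, aw G π r s * f (σ r) (σ s) := by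
    rw [sw]
    calc ∑ r : P, utility G f (swapArr π p q) r
        = ∑ r : P, ∑ s : P, aw G π (σ r) (σ s) * f r s := by
          exact Finset.sum_congr rfl fun r _ => h2 r
      _ = ∑ r : P, ∑ s : P, aw G π r (σ s) * f (σ r) s := by
          rw [← Equiv.sum_comp σ (fun r => ∑ s : P, aw G π r (σ s) * f (σ r) s)]
          apply Finset.sum_congr rfl
          intro r _
          apply Finset.sum_congr rfl
          intro s _
          simp [hσ, Equiv.swap_apply_self]
      _ = ∑ r : P, ∑ s : P, aw G π r s * f (σ r) (σ s) := by
          exact Finset.sum_congr rfl fun r _ => reidx r (σ r)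
  have hsw : sw G f π = ∑ r : P, ∑ s : P, aw G π r s * f r s := by
    rw [sw]; exact Finset.sum_congr rfl fun r _ => utility_eq G f π r
  -- the difference function
  set D : P → P → ℝ := fun r s => aw G π r s * (f (σ r) (σ s) - f r s) with hD
  have hdiff : sw G f (swapArr π p q) - sw G f π = ∑ r : P, ∑ s : P, D r s := by
    rw [hsw', hsw, ← Finset.sum_sub_distrib]
    apply Finset.sum_congr rfl
    intro r _
    rw [← Finset.sum_sub_distrib]
    apply Finset.sum_congr rfl
    intro s _
    simp [hD]; ring
  -- properties of D
  have hσp : σ p = q := Equiv.swap_apply_left p q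
  have hσq : σ q = p := Equiv.swap_apply_right p q
  have hsymD : ∀ r s, D r s = D s r := by
    intro r s
    by_cases hrs : r = s
    · subst hrs; rfl
    · have h1 : f r s = f s r := hsym r s hrs
      have h2' : f (σ r) (σ s) = f (σ s) (σ r) := by
        apply hsym
        exact fun h => hrs (σ.injective h)
      simp only [hD]
      rw [aw_symm, h1, h2']
  have hzero : ∀ r s, r ≠ p → r ≠ q → s ≠ p → s ≠ q → D r s = 0 := by
    intro r s hrp hrq hsp hsq
    have h1 : σ r = r := Equiv.swap_apply_of_ne_of_ne hrp hrq
    have h2' : σ s = s := Equiv.swap_apply_of_ne_of_ne hsp hsq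
    simp [hD, h1, h2']
  have hpp : D p p = 0 := by simp [hD, aw_diag]
  have hqq : D q q = 0 := by simp [hD, aw_diag]
  have hpq0 : D p q = 0 := by
    simp only [hD, hσp, hσq]
    rw [hsym q p (Ne.symm hpq)]; ring
  have hqp0 : D q p = 0 := by
    simp only [hD, hσp, hσq]
    rw [hsym p q hpq]; ring
  -- the key combinatorial identity
  have hkey := key_sum p q hpq D hsymD hzero hpp hpq0 hqp0 hqq
  -- identify the row sums with utility differences
  have hrowp : ∑ s : P, D p s = utility G f (swapArr π p q) q - utility G f π p := by
    have hq' : utility G f (swapArr π p q) q = ∑ s : P, aw G π p s * f q (σ s) := by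
      rw [h2 q]
      calc ∑ s : P, aw G π (σ q) (σ s) * f q s
          = ∑ s : P, aw G π p (σ s) * f q s := by
            apply Finset.sum_congr rfl; intro s _; rw [hσq]
        _ = ∑ s : P, aw G π p s * f q (σ s) := reidx p q
    rw [hq', utility_eq]
    rw [← Finset.sum_sub_distrib]
    apply Finset.sum_congr rfl
    intro s _
    simp only [hD, hσp]
    ring
  have hrowq : ∑ s : P, D q s = utility G f (swapArr π p q) p - utility G f π q := by
    have hp' : utility G f (swapArr π p q) p = ∑ s : P, aw G π q s * f p (σ s) := by
      rw [h2 p]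
      calc ∑ s : P, aw G π (σ p) (σ s) * f p s
          = ∑ s : P, aw G π q (σ s) * f p s := by
            apply Finset.sum_congr rfl; intro s _; rw [hσp]
        _ = ∑ s : P, aw G π q s * f p (σ s) := reidx q p
    rw [hp', utility_eq]
    rw [← Finset.sum_sub_distrib]
    apply Finset.sum_congr rfl
    intro s _
    simp only [hD, hσq]
    ring
  rw [hdiff, hkey, hrowp, hrowq]
  ring

end AuxProofs

/-- Under symmetric preferences, every maximum arrangement is stable;
in particular (whenever an arrangement exists at all) there is a stable arrangement whose
social welfare is maximum, so the price of stability of symmetric Seat Arrangement is 1. -/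
theorem symmetric_maximum_stable_and_pos_one {P V : Type*} [Fintype P] [Fintype V]
    (G : SimpleGraph V) (f : P → P → ℝ)
    (hsym : ∀ p q : P, p ≠ q → f p q = f q p) :
    (∀ πm : P ≃ V, maximum G f πm → stable G f πm) ∧
    (∀ _π₀ : P ≃ V, ∃ πs : P ≃ V, stable G f πs ∧ maximum G f πs) := by
  have main : ∀ πm : P ≃ V, maximum G f πm → stable G f πm := by
    intro πm hmax p q hblock
    obtain ⟨hpq, h1, h2⟩ := hblock
    have heq := sw_swap_eq G f hsym πm p q hpq
    have hle := hmax (swapArr πm p q)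
    linarith
  refine ⟨main, fun π₀ => ?_⟩
  haveI : Nonempty (P ≃ V) := ⟨π₀⟩
  obtain ⟨πs, hπs⟩ := Finite.exists_max (sw G f)
  exact ⟨πs, main πs hπs, hπs⟩
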